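/- Let f : EuclideanSpace ℝ (Fin n) → ℝ be smooth with compact support and let p > 3 be a real number. Then the following integrated p-Bochner (Reilly-type) identity holds: (p−2) ∫ ‖∇f‖^{p−4} ‖Hess f(∇f,·)‖² dx + ∫ ‖∇f‖^{p−2} ‖Hess f‖_F² dx + ∫ ‖∇f‖^{p−2} ⟨∇f, ∇(Δf)⟩ dx = 0, where all integrands are interpreted as 0 at points where ∇f = 0 and the integrals are with respect to Lebesgue measure. -/

import Mathlib

open scoped InnerProductSpace
open MeasureTheory
open scoped Classical

/-- The Hessian of `f` at `x`, as a continuous bilinear form (the second Fréchet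
derivative). -/
noncomputable def hess {V : Type*} [NormedAddCommGroup V] [InnerProductSpace ℝ V]
    (f : V → ℝ) (x : V) : V →L[ℝ] V →L[ℝ] ℝ :=
  fderiv ℝ (fderiv ℝ f) x

/-- The Laplacian of `f` at `x`: the trace of the Hessian with respect to an
orthonormal basis. -/
noncomputable def lap {V : Type*} [NormedAddCommGroup V] [InnerProductSpace ℝ V]
    [FiniteDimensional ℝ V] (f : V → ℝ) (x : V) : ℝ :=
  ∑ i, hess f x (stdOrthonormalBasis ℝ V i) (stdOrthonormalBasis ℝ V i)

/-- The Frobenius inner product of two continuous bilinear forms, computed with respect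
to the standard orthonormal basis (independent of the choice of orthonormal basis). -/
noncomputable def frobC {V : Type*} [NormedAddCommGroup V] [InnerProductSpace ℝ V]
    [FiniteDimensional ℝ V] (H H' : V →L[ℝ] V →L[ℝ] ℝ) : ℝ :=
  ∑ i, ∑ j,
    H (stdOrthonormalBasis ℝ V i) (stdOrthonormalBasis ℝ V j) *
      H' (stdOrthonormalBasis ℝ V i) (stdOrthonormalBasis ℝ V j)

/-- The vector corresponding to a continuous linear functional under the Riesz
isomorphism: `⟨sharpC L, Y⟩ = L Y` for all `Y`. -/
noncomputable def sharpC {V : Type*} [NormedAddCommGroup V] [InnerProductSpace ℝ V]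
    [CompleteSpace V] (L : V →L[ℝ] ℝ) : V :=
  (InnerProductSpace.toDual ℝ V).symm L

set_option synthInstance.maxHeartbeats 1000000
set_option maxHeartbeats 1000000

section Aux

variable {n : ℕ}

noncomputable def sharpL (n : ℕ) :
    (EuclideanSpace ℝ (Fin n) →L[ℝ] ℝ) →L[ℝ] EuclideanSpace ℝ (Fin n) :=
  ∑ i, (ContinuousLinearMap.apply ℝ ℝ
      (stdOrthonormalBasis ℝ (EuclideanSpace ℝ (Fin n)) i)).smulRight
      (stdOrthonormalBasis ℝ (EuclideanSpace ℝ (Fin n)) i)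

lemma sharpL_apply (L : EuclideanSpace ℝ (Fin n) →L[ℝ] ℝ) :
    sharpL n L = ∑ i, L (stdOrthonormalBasis ℝ (EuclideanSpace ℝ (Fin n)) i) •
      stdOrthonormalBasis ℝ (EuclideanSpace ℝ (Fin n)) i := by
  simp [sharpL, ContinuousLinearMap.sum_apply]

lemma inner_sharpL (L : EuclideanSpace ℝ (Fin n) →L[ℝ] ℝ) (y : EuclideanSpace ℝ (Fin n)) :
    ⟪sharpL n L, y⟫_ℝ = L y := by
  rw [sharpL_apply, sum_inner]
  simp only [real_inner_smul_left]
  conv_rhs => rw [← (stdOrthonormalBasis ℝ (EuclideanSpace ℝ (Fin n))).sum_repr' y, map_sum]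
  simp only [_root_.map_smul, smul_eq_mul]
  exact Finset.sum_congr rfl fun i _ => mul_comm _ _

lemma sharpL_eq_sharpC (L : EuclideanSpace ℝ (Fin n) →L[ℝ] ℝ) : sharpL n L = sharpC L := by
  apply ext_inner_right ℝ
  intro y
  rw [inner_sharpL]
  exact (InnerProductSpace.toDual_symm_apply).symm

lemma norm_sharpL (L : EuclideanSpace ℝ (Fin n) →L[ℝ] ℝ) : ‖sharpL n L‖ = ‖L‖ := by
  rw [sharpL_eq_sharpC]
  exact LinearIsometryEquiv.norm_map _ _

lemma gradient_eq_sharpL (f : EuclideanSpace ℝ (Fin n) → ℝ) (x : EuclideanSpace ℝ (Fin n)) :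
    gradient f x = sharpL n (fderiv ℝ f x) :=
  (sharpL_eq_sharpC _).symm

variable (f : EuclideanSpace ℝ (Fin n) → ℝ)

lemma contDiff_fderiv (hf : ContDiff ℝ (⊤ : ℕ∞) f) : ContDiff ℝ (⊤ : ℕ∞) (fderiv ℝ f) :=
  hf.fderiv_right le_rfl

lemma contDiff_hess (hf : ContDiff ℝ (⊤ : ℕ∞) f) : ContDiff ℝ (⊤ : ℕ∞) (hess f) :=
  (contDiff_fderiv f hf).fderiv_right le_rfl

noncomputable instance instNACG3 : NormedAddCommGroup (EuclideanSpace ℝ (Fin n) →L[ℝ]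
    EuclideanSpace ℝ (Fin n) →L[ℝ] EuclideanSpace ℝ (Fin n) →L[ℝ] ℝ) :=
  @ContinuousLinearMap.toNormedAddCommGroup ℝ ℝ (EuclideanSpace ℝ (Fin n))
    (EuclideanSpace ℝ (Fin n) →L[ℝ] EuclideanSpace ℝ (Fin n) →L[ℝ] ℝ) _ _ _ _ _ _ (RingHom.id ℝ) _

noncomputable instance instNS3 : NormedSpace ℝ (EuclideanSpace ℝ (Fin n) →L[ℝ]
    EuclideanSpace ℝ (Fin n) →L[ℝ] EuclideanSpace ℝ (Fin n) →L[ℝ] ℝ) :=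
  @ContinuousLinearMap.toNormedSpace ℝ ℝ (EuclideanSpace ℝ (Fin n))
    (EuclideanSpace ℝ (Fin n) →L[ℝ] EuclideanSpace ℝ (Fin n) →L[ℝ] ℝ) _ _ _ _ _ _ (RingHom.id ℝ) _
    ℝ _ _ _

lemma contDiff_T (hf : ContDiff ℝ (⊤ : ℕ∞) f) : ContDiff ℝ (⊤ : ℕ∞) (fderiv ℝ (hess f)) :=
  (contDiff_hess f hf).fderiv_right le_rfl

lemma hasFDerivAt_hess (hf : ContDiff ℝ (⊤ : ℕ∞) f) (x : EuclideanSpace ℝ (Fin n)) :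
    HasFDerivAt (fderiv ℝ f) (hess f x) x :=
  ((contDiff_fderiv f hf).differentiable (by simp)).differentiableAt.hasFDerivAt

lemma hasFDerivAt_T (hf : ContDiff ℝ (⊤ : ℕ∞) f) (x : EuclideanSpace ℝ (Fin n)) :
    HasFDerivAt (hess f) (fderiv ℝ (hess f) x) x :=
  ((contDiff_hess f hf).differentiable (by simp)).differentiableAt.hasFDerivAt

lemma hasFDerivAt_gradient (hf : ContDiff ℝ (⊤ : ℕ∞) f) (x : EuclideanSpace ℝ (Fin n)) :
    HasFDerivAt (gradient f) ((sharpL n).comp (hess f x)) x := by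
  have h := (sharpL n).hasFDerivAt.comp x (hasFDerivAt_hess f hf x)
  have he : gradient f = fun y => sharpL n (fderiv ℝ f y) := funext fun y => gradient_eq_sharpL f y
  rw [he]
  exact h

lemma hess_symm (hf : ContDiff ℝ (⊤ : ℕ∞) f) (x u v : EuclideanSpace ℝ (Fin n)) :
    hess f x u v = hess f x v u :=
  (hf.contDiffAt.isSymmSndFDerivAt (by norm_num; exact WithTop.coe_le_coe.mpr le_top)) u v

lemma T_symm (hf : ContDiff ℝ (⊤ : ℕ∞) f) (x u v : EuclideanSpace ℝ (Fin n)) :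
    fderiv ℝ (hess f) x u v = fderiv ℝ (hess f) x v u := by
  have h := (((contDiff_fderiv f hf).contDiffAt (x := x)).isSymmSndFDerivAt (n := (⊤ : ℕ∞)) (by norm_num; exact WithTop.coe_le_coe.mpr le_top))
  exact h u v

/-- a^(2:ℕ) raised to q/2 (rpow) equals a^q for a ≥ 0. -/
lemma sq_rpow_half (a : ℝ) (ha : 0 ≤ a) (q : ℝ) : (a ^ (2:ℕ)) ^ (q / 2) = a ^ q := by
  rw [← Real.rpow_natCast a 2, ← Real.rpow_mul ha]
  congr 1
  ring

noncomputable def Wf (f : EuclideanSpace ℝ (Fin n) → ℝ) (x : EuclideanSpace ℝ (Fin n)) :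
    EuclideanSpace ℝ (Fin n) :=
  sharpL n (hess f x (gradient f x))

noncomputable def LB (f : EuclideanSpace ℝ (Fin n) → ℝ) (x : EuclideanSpace ℝ (Fin n)) :
    EuclideanSpace ℝ (Fin n) →L[ℝ] EuclideanSpace ℝ (Fin n) →L[ℝ] ℝ :=
  (hess f x).comp ((sharpL n).comp (hess f x))
    + (fderiv ℝ (hess f) x).flip (gradient f x)

noncomputable def DW (f : EuclideanSpace ℝ (Fin n) → ℝ) (x : EuclideanSpace ℝ (Fin n)) :
    EuclideanSpace ℝ (Fin n) →L[ℝ] EuclideanSpace ℝ (Fin n) :=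
  (sharpL n).comp (LB f x)

noncomputable def dgF (f : EuclideanSpace ℝ (Fin n) → ℝ) (p : ℝ) (x : EuclideanSpace ℝ (Fin n)) :
    EuclideanSpace ℝ (Fin n) →L[ℝ] ℝ :=
  ((p - 2) * ‖gradient f x‖ ^ (p - 4)) • (hess f x (gradient f x))

noncomputable def Vf (f : EuclideanSpace ℝ (Fin n) → ℝ) (p : ℝ) (x : EuclideanSpace ℝ (Fin n)) :
    EuclideanSpace ℝ (Fin n) :=
  (‖gradient f x‖ ^ (p - 2)) • Wf f x

noncomputable def Dfield (f : EuclideanSpace ℝ (Fin n) → ℝ) (p : ℝ)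
    (x : EuclideanSpace ℝ (Fin n)) :
    EuclideanSpace ℝ (Fin n) →L[ℝ] EuclideanSpace ℝ (Fin n) :=
  if gradient f x = 0 then 0 else
    (‖gradient f x‖ ^ (p - 2)) • DW f x + (dgF f p x).smulRight (Wf f x)

lemma hasFDerivAt_W (hf : ContDiff ℝ (⊤ : ℕ∞) f) (x : EuclideanSpace ℝ (Fin n)) :
    HasFDerivAt (Wf f) (DW f x) x := by
  have hB : HasFDerivAt (fun y => hess f y (gradient f y)) (LB f x) x :=
    (hasFDerivAt_T f hf x).clm_apply (hasFDerivAt_gradient f hf x)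
  exact (sharpL n).hasFDerivAt.comp x hB

lemma norm_Wf_le (x : EuclideanSpace ℝ (Fin n)) :
    ‖Wf f x‖ ≤ ‖hess f x‖ * ‖gradient f x‖ := by
  rw [Wf, norm_sharpL]
  exact (hess f x).le_opNorm _

lemma hasFDerivAt_rpow_grad (hf : ContDiff ℝ (⊤ : ℕ∞) f) (p : ℝ) (x : EuclideanSpace ℝ (Fin n))
    (hx : gradient f x ≠ 0) :
    HasFDerivAt (fun y => ‖gradient f y‖ ^ (p - 2)) (dgF f p x) x := by
  have hG := hasFDerivAt_gradient f hf x
  have hφ : HasFDerivAt (fun y => ⟪gradient f y, gradient f y⟫_ℝ)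
      ((fderivInnerCLM ℝ (gradient f x, gradient f x)).comp
        (((sharpL n).comp (hess f x)).prod ((sharpL n).comp (hess f x)))) x :=
    HasFDerivAt.inner ℝ hG hG
  have hpos : (0:ℝ) < ⟪gradient f x, gradient f x⟫_ℝ := by
    rw [real_inner_self_eq_norm_sq]; exact pow_pos (norm_pos_iff.mpr hx) 2
  have hψ : HasDerivAt (fun t : ℝ => t ^ ((p - 2) / 2))
      (((p - 2) / 2) * (⟪gradient f x, gradient f x⟫_ℝ) ^ ((p - 2) / 2 - 1))
      (⟪gradient f x, gradient f x⟫_ℝ) :=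
    Real.hasDerivAt_rpow_const (Or.inl (ne_of_gt hpos))
  have hcomp := hψ.comp_hasFDerivAt x hφ
  have heq : ((fun t : ℝ => t ^ ((p - 2) / 2)) ∘ fun y => ⟪gradient f y, gradient f y⟫_ℝ)
      = fun y => ‖gradient f y‖ ^ (p - 2) := by
    funext y
    simp only [Function.comp_apply, real_inner_self_eq_norm_sq]
    exact sq_rpow_half _ (norm_nonneg _) _
  rw [heq] at hcomp
  refine hcomp.congr_fderiv (Eq.symm ?_)
  ext v
  simp only [dgF, ContinuousLinearMap.smul_apply, ContinuousLinearMap.coe_smul', Pi.smul_apply,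
    ContinuousLinearMap.coe_comp', Function.comp_apply, ContinuousLinearMap.prod_apply,
    fderivInnerCLM_apply, smul_eq_mul]
  have hsh : ⟪gradient f x, sharpL n ((hess f x) v)⟫_ℝ = hess f x (gradient f x) v := by
    rw [real_inner_comm, inner_sharpL]
    exact hess_symm f hf x v (gradient f x)
  rw [hsh, inner_sharpL, hess_symm f hf x v (gradient f x)]
  have h4 : (⟪gradient f x, gradient f x⟫_ℝ) ^ ((p - 2) / 2 - 1) = ‖gradient f x‖ ^ (p - 4) := by
    rw [real_inner_self_eq_norm_sq]
    have : (p - 2) / 2 - 1 = (p - 4) / 2 := by ring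
    rw [this]
    exact sq_rpow_half _ (norm_nonneg _) _
  rw [h4]
  ring

lemma hasFDerivAt_Vf (hf : ContDiff ℝ (⊤ : ℕ∞) f) (p : ℝ) (hp : 3 < p) (x : EuclideanSpace ℝ (Fin n)) :
    HasFDerivAt (Vf f p) (Dfield f p x) x := by
  by_cases hx : gradient f x = 0
  · -- zero case: squeeze
    rw [Dfield, if_pos hx]
    rw [hasFDerivAt_iff_isLittleO_nhds_zero]
    have hp2 : (0:ℝ) < p - 2 := by linarith
    have hV0 : Vf f p x = 0 := by
      rw [Vf, hx]
      simp [Real.zero_rpow (ne_of_gt hp2)]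
    simp only [hV0, sub_zero, ContinuousLinearMap.zero_apply]
    have hGsmooth : ContDiff ℝ (⊤ : ℕ∞) (gradient f) := by
      have he : gradient f = fun y => sharpL n (fderiv ℝ f y) :=
        funext fun y => gradient_eq_sharpL f y
      rw [he]
      exact (sharpL n).contDiff.comp (contDiff_fderiv f hf)
    obtain ⟨K, t, ht, hlip⟩ := (hGsmooth.contDiffAt.of_le (by simp)).exists_lipschitzOnWith
    have hxt : x ∈ t := mem_of_mem_nhds ht
    have htend : Filter.Tendsto (fun h : EuclideanSpace ℝ (Fin n) => x + h)
        (nhds 0) (nhds x) := by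
      exact (continuous_const.add continuous_id).tendsto' (0 : EuclideanSpace ℝ (Fin n)) x (by simp)
    have hHb : ∀ᶠ y in nhds x, ‖hess f y‖ ≤ ‖hess f x‖ + 1 := by
      have hcont : Continuous fun y => ‖hess f y‖ :=
        Continuous.norm
          (E := EuclideanSpace ℝ (Fin n) →L[ℝ] EuclideanSpace ℝ (Fin n) →L[ℝ] ℝ)
          (contDiff_hess f hf).continuous
      exact (hcont.tendsto x).eventually (eventually_le_nhds (lt_add_one _))
    have h1 : (fun h : EuclideanSpace ℝ (Fin n) => Vf f p (x + h))
        =O[nhds 0] (fun h => ‖h‖ ^ (p - 1)) := by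
      rw [Asymptotics.isBigO_iff]
      refine ⟨(‖hess f x‖ + 1) * (K : ℝ) ^ (p - 1), ?_⟩
      filter_upwards [htend.eventually ht, htend.eventually hHb] with h h1t h2M
      have hGle : ‖gradient f (x + h)‖ ≤ (K : ℝ) * ‖h‖ := by
        have hd := hlip.dist_le_mul (x + h) h1t x hxt
        rw [hx, dist_zero_right] at hd
        have hdd : dist (x + h) x = ‖h‖ := by simp [dist_eq_norm]
        rwa [hdd] at hd
      have hG0 : (0:ℝ) ≤ ‖gradient f (x + h)‖ := norm_nonneg _
      have hKh : (0:ℝ) ≤ (K : ℝ) * ‖h‖ := le_trans hG0 hGle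
      have hW : ‖Wf f (x + h)‖ ≤ ‖hess f (x + h)‖ * ‖gradient f (x + h)‖ := norm_Wf_le f _
      have step1 : ‖Vf f p (x + h)‖ ≤
          ‖gradient f (x + h)‖ ^ (p - 2) * (‖hess f (x + h)‖ * ‖gradient f (x + h)‖) := by
        rw [Vf, norm_smul, Real.norm_of_nonneg (Real.rpow_nonneg hG0 _)]
        exact mul_le_mul_of_nonneg_left hW (Real.rpow_nonneg hG0 _)
      have step2 : ‖gradient f (x + h)‖ ^ (p - 2) * (‖hess f (x + h)‖ * ‖gradient f (x + h)‖)
          ≤ (‖hess f x‖ + 1) * (‖gradient f (x + h)‖ ^ (p - 2) * ‖gradient f (x + h)‖) := by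
        have h1 : ‖gradient f (x + h)‖ ^ (p - 2) * (‖hess f (x + h)‖ * ‖gradient f (x + h)‖)
            = ‖hess f (x + h)‖ * (‖gradient f (x + h)‖ ^ (p - 2) * ‖gradient f (x + h)‖) := by
          ring
        rw [h1]
        exact mul_le_mul_of_nonneg_right h2M
          (mul_nonneg (Real.rpow_nonneg hG0 _) hG0)
      have step3 : ‖gradient f (x + h)‖ ^ (p - 2) * ‖gradient f (x + h)‖
          = ‖gradient f (x + h)‖ ^ (p - 1) := by
        have : p - 1 = (p - 2) + 1 := by ring
        rw [this, Real.rpow_add' hG0 (by norm_num; linarith), Real.rpow_one]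
      have step4 : ‖gradient f (x + h)‖ ^ (p - 1) ≤ ((K : ℝ) * ‖h‖) ^ (p - 1) :=
        Real.rpow_le_rpow hG0 hGle (by linarith)
      have step5 : ((K : ℝ) * ‖h‖) ^ (p - 1) = (K : ℝ) ^ (p - 1) * ‖h‖ ^ (p - 1) :=
        Real.mul_rpow K.coe_nonneg (norm_nonneg _)
      calc ‖Vf f p (x + h)‖ ≤ (‖hess f x‖ + 1) *
            (‖gradient f (x + h)‖ ^ (p - 2) * ‖gradient f (x + h)‖) := le_trans step1 step2
        _ = (‖hess f x‖ + 1) * ‖gradient f (x + h)‖ ^ (p - 1) := by rw [step3]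
        _ ≤ (‖hess f x‖ + 1) * ((K : ℝ) * ‖h‖) ^ (p - 1) := by
            apply mul_le_mul_of_nonneg_left step4
            positivity
        _ = (‖hess f x‖ + 1) * (K : ℝ) ^ (p - 1) * (‖h‖ ^ (p - 1)) := by rw [step5]; ring
        _ ≤ (‖hess f x‖ + 1) * (K : ℝ) ^ (p - 1) * ‖‖h‖ ^ (p - 1)‖ := by
            rw [Real.norm_of_nonneg (Real.rpow_nonneg (norm_nonneg _) _)]
    have h2 : (fun h : EuclideanSpace ℝ (Fin n) => ‖h‖ ^ (p - 1)) =o[nhds 0] (fun h => h) := by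
      rw [← Asymptotics.isLittleO_norm_right]
      have heq : (fun h : EuclideanSpace ℝ (Fin n) => ‖h‖ ^ (p - 1))
          = fun h => ‖h‖ ^ (p - 2) * ‖h‖ := by
        funext h
        have : p - 1 = (p - 2) + 1 := by ring
        rw [this, Real.rpow_add' (norm_nonneg _) (by norm_num; linarith), Real.rpow_one]
      rw [heq]
      have ha : (fun h : EuclideanSpace ℝ (Fin n) => ‖h‖ ^ (p - 2))
          =o[nhds 0] (fun _ => (1:ℝ)) := by
        rw [Asymptotics.isLittleO_one_iff]
        have hc : ContinuousAt (fun s : ℝ => s ^ (p - 2)) 0 :=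
          Real.continuousAt_rpow_const 0 (p - 2) (Or.inr (le_of_lt hp2))
        have hn : Filter.Tendsto (fun h : EuclideanSpace ℝ (Fin n) => ‖h‖)
            (nhds 0) (nhds 0) := by
          simpa using continuous_norm.tendsto (0 : EuclideanSpace ℝ (Fin n))
        have := hc.tendsto.comp hn
        simpa [Function.comp_def, Real.zero_rpow (ne_of_gt hp2)] using this
      have hcomb := ha.mul_isBigO
        (Asymptotics.isBigO_refl (fun h : EuclideanSpace ℝ (Fin n) => ‖h‖) (nhds 0))
      simpa using hcomb
    exact h1.trans_isLittleO h2
  · rw [Dfield, if_neg hx]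
    exact (hasFDerivAt_rpow_grad f hf p x hx).smul (hasFDerivAt_W f hf x)

end Aux

section Aux2

variable {n : ℕ} (f : EuclideanSpace ℝ (Fin n) → ℝ)

lemma fderiv_lap_apply (hf : ContDiff ℝ (⊤ : ℕ∞) f) (x v : EuclideanSpace ℝ (Fin n)) :
    fderiv ℝ (lap f) x v =
      ∑ i, fderiv ℝ (hess f) x v (stdOrthonormalBasis ℝ (EuclideanSpace ℝ (Fin n)) i)
        (stdOrthonormalBasis ℝ (EuclideanSpace ℝ (Fin n)) i) := by
  have hsum := HasFDerivAt.fun_sum (A := fun i x => hess f x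
      (stdOrthonormalBasis ℝ (EuclideanSpace ℝ (Fin n)) i)
      (stdOrthonormalBasis ℝ (EuclideanSpace ℝ (Fin n)) i)) (u := Finset.univ) (x := x)
    (fun i _ => ((hasFDerivAt_T f hf x).clm_apply
        (hasFDerivAt_const (stdOrthonormalBasis ℝ (EuclideanSpace ℝ (Fin n)) i) x)).clm_apply
      (hasFDerivAt_const (stdOrthonormalBasis ℝ (EuclideanSpace ℝ (Fin n)) i) x))
  have hlap : HasFDerivAt (lap f) _ x := hsum
  rw [hlap.fderiv]
  simp [ContinuousLinearMap.sum_apply]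

lemma contDiff_lap (hf : ContDiff ℝ (⊤ : ℕ∞) f) : ContDiff ℝ (⊤ : ℕ∞) (lap f) := by
  have : ContDiff ℝ (⊤ : ℕ∞) fun x => ∑ i, hess f x
      (stdOrthonormalBasis ℝ (EuclideanSpace ℝ (Fin n)) i)
      (stdOrthonormalBasis ℝ (EuclideanSpace ℝ (Fin n)) i) :=
    ContDiff.sum fun i _ =>
      ((contDiff_hess f hf).clm_apply contDiff_const).clm_apply contDiff_const
  exact this

lemma inner_grad_lap (hf : ContDiff ℝ (⊤ : ℕ∞) f) (x : EuclideanSpace ℝ (Fin n)) :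
    ⟪gradient f x, gradient (lap f) x⟫_ℝ =
      ∑ i, fderiv ℝ (hess f) x (gradient f x)
        (stdOrthonormalBasis ℝ (EuclideanSpace ℝ (Fin n)) i)
        (stdOrthonormalBasis ℝ (EuclideanSpace ℝ (Fin n)) i) := by
  rw [real_inner_comm, gradient_eq_sharpL, inner_sharpL]
  exact fderiv_lap_apply f hf x (gradient f x)

lemma norm_Wf_sq (x : EuclideanSpace ℝ (Fin n)) :
    ∑ i, (hess f x (gradient f x) (stdOrthonormalBasis ℝ (EuclideanSpace ℝ (Fin n)) i)) *
      ⟪Wf f x, stdOrthonormalBasis ℝ (EuclideanSpace ℝ (Fin n)) i⟫_ℝ = ‖Wf f x‖ ^ 2 := by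
  have h1 : ∀ i, hess f x (gradient f x) (stdOrthonormalBasis ℝ (EuclideanSpace ℝ (Fin n)) i)
      = ⟪Wf f x, stdOrthonormalBasis ℝ (EuclideanSpace ℝ (Fin n)) i⟫_ℝ := fun i =>
    (inner_sharpL _ _).symm
  calc ∑ i, (hess f x (gradient f x) (stdOrthonormalBasis ℝ (EuclideanSpace ℝ (Fin n)) i)) *
        ⟪Wf f x, stdOrthonormalBasis ℝ (EuclideanSpace ℝ (Fin n)) i⟫_ℝ
      = ∑ i, ⟪Wf f x, stdOrthonormalBasis ℝ (EuclideanSpace ℝ (Fin n)) i⟫_ℝ *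
        ⟪stdOrthonormalBasis ℝ (EuclideanSpace ℝ (Fin n)) i, Wf f x⟫_ℝ := by
        refine Finset.sum_congr rfl fun i _ => ?_
        rw [h1 i, real_inner_comm (Wf f x)]
    _ = ⟪Wf f x, Wf f x⟫_ℝ := (stdOrthonormalBasis ℝ (EuclideanSpace ℝ (Fin n))).sum_inner_mul_inner _ _
    _ = ‖Wf f x‖ ^ 2 := real_inner_self_eq_norm_sq _

lemma frob_sum (hf : ContDiff ℝ (⊤ : ℕ∞) f) (x : EuclideanSpace ℝ (Fin n)) :
    ∑ i, hess f x (sharpL n (hess f x (stdOrthonormalBasis ℝ (EuclideanSpace ℝ (Fin n)) i)))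
      (stdOrthonormalBasis ℝ (EuclideanSpace ℝ (Fin n)) i) = frobC (hess f x) (hess f x) := by
  rw [frobC]
  refine Finset.sum_congr rfl fun i _ => ?_
  rw [sharpL_apply, map_sum]
  rw [ContinuousLinearMap.sum_apply]
  refine Finset.sum_congr rfl fun j _ => ?_
  rw [_root_.map_smul]
  simp only [ContinuousLinearMap.smul_apply, smul_eq_mul]
  rw [hess_symm f hf x (stdOrthonormalBasis ℝ (EuclideanSpace ℝ (Fin n)) j)
    (stdOrthonormalBasis ℝ (EuclideanSpace ℝ (Fin n)) i)]

lemma div_eq (hf : ContDiff ℝ (⊤ : ℕ∞) f) (p : ℝ) (x : EuclideanSpace ℝ (Fin n)) :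
    ∑ i, ⟪Dfield f p x (stdOrthonormalBasis ℝ (EuclideanSpace ℝ (Fin n)) i),
        stdOrthonormalBasis ℝ (EuclideanSpace ℝ (Fin n)) i⟫_ℝ =
      (p - 2) * (if gradient f x = 0 then (0 : ℝ) else
          ‖gradient f x‖ ^ (p - 4) * ‖Wf f x‖ ^ 2) +
        ((if gradient f x = 0 then (0 : ℝ) else
          ‖gradient f x‖ ^ (p - 2) * frobC (hess f x) (hess f x)) +
        (if gradient f x = 0 then (0 : ℝ) else
          ‖gradient f x‖ ^ (p - 2) * ⟪gradient f x, gradient (lap f) x⟫_ℝ)) := by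
  by_cases hx : gradient f x = 0
  · simp [Dfield, hx]
  · rw [Dfield, if_neg hx, if_neg hx, if_neg hx, if_neg hx]
    have hterm : ∀ i, ⟪((‖gradient f x‖ ^ (p - 2)) • DW f x
          + (dgF f p x).smulRight (Wf f x)) (stdOrthonormalBasis ℝ (EuclideanSpace ℝ (Fin n)) i),
          stdOrthonormalBasis ℝ (EuclideanSpace ℝ (Fin n)) i⟫_ℝ
        = ‖gradient f x‖ ^ (p - 2) *
            (hess f x (sharpL n (hess f x (stdOrthonormalBasis ℝ (EuclideanSpace ℝ (Fin n)) i)))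
              (stdOrthonormalBasis ℝ (EuclideanSpace ℝ (Fin n)) i)
            + fderiv ℝ (hess f) x (gradient f x) (stdOrthonormalBasis ℝ (EuclideanSpace ℝ (Fin n)) i)
              (stdOrthonormalBasis ℝ (EuclideanSpace ℝ (Fin n)) i))
          + ((p - 2) * ‖gradient f x‖ ^ (p - 4)) *
            ((hess f x (gradient f x) (stdOrthonormalBasis ℝ (EuclideanSpace ℝ (Fin n)) i)) *
              ⟪Wf f x, stdOrthonormalBasis ℝ (EuclideanSpace ℝ (Fin n)) i⟫_ℝ) := by
      intro i
      set e := stdOrthonormalBasis ℝ (EuclideanSpace ℝ (Fin n)) i with he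
      rw [ContinuousLinearMap.add_apply, inner_add_left]
      congr 1
      · rw [ContinuousLinearMap.smul_apply, real_inner_smul_left]
        congr 1
        rw [DW, ContinuousLinearMap.coe_comp', Function.comp_apply, inner_sharpL]
        rw [LB]
        simp only [ContinuousLinearMap.add_apply, ContinuousLinearMap.coe_comp',
          Function.comp_apply, ContinuousLinearMap.flip_apply]
        congr 1
        rw [T_symm f hf x e (gradient f x)]
      · rw [ContinuousLinearMap.smulRight_apply, real_inner_smul_left]
        rw [dgF]
        simp only [ContinuousLinearMap.smul_apply, smul_eq_mul]
        ring
    rw [Finset.sum_congr rfl fun i _ => hterm i]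
    rw [Finset.sum_add_distrib, ← Finset.mul_sum, ← Finset.mul_sum]
    rw [Finset.sum_add_distrib, norm_Wf_sq, frob_sum f hf, ← inner_grad_lap f hf]
    ring

end Aux2

section Aux3

variable {n : ℕ} (f : EuclideanSpace ℝ (Fin n) → ℝ)

lemma contDiff_gradient (hf : ContDiff ℝ (⊤ : ℕ∞) f) : ContDiff ℝ (⊤ : ℕ∞) (gradient f) := by
  have he : gradient f = fun y => sharpL n (fderiv ℝ f y) :=
    funext fun y => gradient_eq_sharpL f y
  rw [he]
  exact (sharpL n).contDiff.comp (contDiff_fderiv f hf)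

lemma grad_zero_outside (hsupp : HasCompactSupport f) (x : EuclideanSpace ℝ (Fin n))
    (hx : x ∉ tsupport f) : gradient f x = 0 := by
  have h : fderiv ℝ f x = 0 := by
    by_contra h
    exact hx (support_fderiv_subset ℝ (Function.mem_support.2 h))
  rw [gradient_eq_sharpL, h, map_zero]

lemma cont_normG_rpow (hf : ContDiff ℝ (⊤ : ℕ∞) f) (q : ℝ) (hq : 0 ≤ q) :
    Continuous fun x => ‖gradient f x‖ ^ q :=
  ((contDiff_gradient f hf).continuous.norm).rpow_const fun _ => Or.inr hq

lemma cont_Wf (hf : ContDiff ℝ (⊤ : ℕ∞) f) : Continuous (Wf f) := by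
  apply (sharpL n).continuous.comp
  exact Continuous.clm_apply (contDiff_hess f hf).continuous (contDiff_gradient f hf).continuous

lemma cont_normH (hf : ContDiff ℝ (⊤ : ℕ∞) f) : Continuous fun x => ‖hess f x‖ :=
  Continuous.norm
    (E := EuclideanSpace ℝ (Fin n) →L[ℝ] EuclideanSpace ℝ (Fin n) →L[ℝ] ℝ)
    (contDiff_hess f hf).continuous

lemma norm_smul_clmEE (c : ℝ)
    (T : EuclideanSpace ℝ (Fin n) →L[ℝ] EuclideanSpace ℝ (Fin n)) :
    ‖c • T‖ = ‖c‖ * ‖T‖ :=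
  norm_smul c T

lemma norm_smul_clmER (c : ℝ) (T : EuclideanSpace ℝ (Fin n) →L[ℝ] ℝ) :
    ‖c • T‖ = ‖c‖ * ‖T‖ :=
  norm_smul c T

lemma cont_DW (hf : ContDiff ℝ (⊤ : ℕ∞) f) : Continuous (DW f) := by
  apply Continuous.clm_comp continuous_const
  apply Continuous.add
  · exact Continuous.clm_comp (contDiff_hess f hf).continuous
      (Continuous.clm_comp continuous_const (contDiff_hess f hf).continuous)
  · refine Continuous.clm_apply ?_ (contDiff_gradient f hf).continuous
    have h1 : Continuous fun x => (ContinuousLinearMap.flipₗᵢ ℝ (EuclideanSpace ℝ (Fin n))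
        (EuclideanSpace ℝ (Fin n)) (EuclideanSpace ℝ (Fin n) →L[ℝ] ℝ)) (fderiv ℝ (hess f) x) :=
      (ContinuousLinearMap.flipₗᵢ ℝ (EuclideanSpace ℝ (Fin n)) (EuclideanSpace ℝ (Fin n))
        (EuclideanSpace ℝ (Fin n) →L[ℝ] ℝ)).continuous.comp (contDiff_T f hf).continuous
    have h2 : (fun x => (ContinuousLinearMap.flipₗᵢ ℝ (EuclideanSpace ℝ (Fin n))
        (EuclideanSpace ℝ (Fin n)) (EuclideanSpace ℝ (Fin n) →L[ℝ] ℝ)) (fderiv ℝ (hess f) x))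
        = fun x => (fderiv ℝ (hess f) x).flip := rfl
    exact h2 ▸ h1

lemma rpow_sub4_mul_sq (a : ℝ) (ha : 0 < a) (p : ℝ) : a ^ (p - 4) * a ^ (2:ℕ) = a ^ (p - 2) := by
  rw [← Real.rpow_natCast a 2, ← Real.rpow_add ha]
  congr 1
  ring

lemma cont_Dfield (hf : ContDiff ℝ (⊤ : ℕ∞) f) (p : ℝ) (hp : 3 < p) : Continuous (Dfield f p) := by
  have hp2 : (0:ℝ) < p - 2 := by linarith
  rw [continuous_iff_continuousAt]
  intro x₀
  by_cases hx : gradient f x₀ = 0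
  · have h0 : Dfield f p x₀ = 0 := by rw [Dfield, if_pos hx]
    rw [ContinuousAt, h0]
    have hβc : Continuous fun x => (p - 2) * (‖hess f x‖ ^ (2:ℕ) * ‖gradient f x‖ ^ (p - 2))
        + ‖gradient f x‖ ^ (p - 2) * ‖DW f x‖ := by
      apply Continuous.add
      · exact continuous_const.mul (((cont_normH f hf).pow 2).mul
          (cont_normG_rpow f hf _ (le_of_lt hp2)))
      · refine (cont_normG_rpow f hf _ (le_of_lt hp2)).mul ?_
        exact Continuous.norm
          (E := EuclideanSpace ℝ (Fin n) →L[ℝ] EuclideanSpace ℝ (Fin n)) (cont_DW f hf)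
    have hβ0 : ((p - 2) * (‖hess f x₀‖ ^ (2:ℕ) * ‖gradient f x₀‖ ^ (p - 2))
        + ‖gradient f x₀‖ ^ (p - 2) * ‖DW f x₀‖) = 0 := by
      rw [hx]
      simp [Real.zero_rpow (ne_of_gt hp2)]
    have htend := hβc.tendsto x₀
    rw [hβ0] at htend
    apply squeeze_zero_norm _ htend
    intro x
    by_cases hgx : gradient f x = 0
    · rw [Dfield, if_pos hgx, norm_zero]
      have h1 : (0:ℝ) ≤ ‖gradient f x‖ ^ (p - 2) := Real.rpow_nonneg (norm_nonneg _) _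
      have h2 : (0:ℝ) ≤ ‖hess f x‖ ^ (2:ℕ) := by positivity
      have h3 : (0:ℝ) ≤ ‖DW f x‖ := norm_nonneg _
      exact add_nonneg (mul_nonneg hp2.le (mul_nonneg h2 h1)) (mul_nonneg h1 h3)
    · rw [Dfield, if_neg hgx]
      refine le_trans (norm_add_le _ _) ?_
      have hA : ‖(‖gradient f x‖ ^ (p - 2)) • DW f x‖
          ≤ ‖gradient f x‖ ^ (p - 2) * ‖DW f x‖ := by
        rw [norm_smul_clmEE, Real.norm_of_nonneg (Real.rpow_nonneg (norm_nonneg _) _)]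
      have hB : ‖(dgF f p x).smulRight (Wf f x)‖
          ≤ (p - 2) * (‖hess f x‖ ^ (2:ℕ) * ‖gradient f x‖ ^ (p - 2)) := by
        rw [ContinuousLinearMap.norm_smulRight_apply]
        have hd : ‖dgF f p x‖ ≤ (p - 2) * ‖gradient f x‖ ^ (p - 4)
            * (‖hess f x‖ * ‖gradient f x‖) := by
          rw [dgF, norm_smul_clmER]
          have h1 : ‖(p - 2) * ‖gradient f x‖ ^ (p - 4)‖
              = (p - 2) * ‖gradient f x‖ ^ (p - 4) := by
            rw [Real.norm_of_nonneg]
            positivity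
          rw [h1]
          apply mul_le_mul_of_nonneg_left ((hess f x).le_opNorm _)
          positivity
        have hw : ‖Wf f x‖ ≤ ‖hess f x‖ * ‖gradient f x‖ := norm_Wf_le f x
        have := mul_le_mul hd hw (norm_nonneg _) (by positivity)
        refine le_trans this (le_of_eq ?_)
        have hGpos : (0:ℝ) < ‖gradient f x‖ := norm_pos_iff.mpr hgx
        have hr := rpow_sub4_mul_sq ‖gradient f x‖ hGpos p
        linear_combination (p - 2) * ‖hess f x‖ ^ 2 * hr
      have hAB := add_le_add hA hB
      linarith
  · have hopen : IsOpen {x : EuclideanSpace ℝ (Fin n) | gradient f x ≠ 0} :=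
      isOpen_compl_iff.mpr (isClosed_singleton.preimage (contDiff_gradient f hf).continuous)
    have hev : ∀ᶠ x in nhds x₀, Dfield f p x
        = (‖gradient f x‖ ^ (p - 2)) • DW f x + (dgF f p x).smulRight (Wf f x) := by
      filter_upwards [hopen.mem_nhds hx] with x hgx
      rw [Dfield, if_neg hgx]
    have hrp : ∀ q : ℝ, ContinuousAt (fun x => ‖gradient f x‖ ^ q) x₀ := by
      intro q
      exact ContinuousAt.comp (x := x₀) (g := fun s : ℝ => s ^ q)
        (f := fun x => ‖gradient f x‖)
        (Real.continuousAt_rpow_const _ _ (Or.inl (norm_ne_zero_iff.mpr hx)))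
        ((contDiff_gradient f hf).continuous.norm.continuousAt)
    have hc : ContinuousAt (fun x =>
        (‖gradient f x‖ ^ (p - 2)) • DW f x + (dgF f p x).smulRight (Wf f x)) x₀ := by
      apply ContinuousAt.add
      · exact (hrp (p - 2)).smul (cont_DW f hf).continuousAt
      · have hdg : ContinuousAt (dgF f p) x₀ := by
          unfold dgF
          refine ContinuousAt.smul (f := fun x => (p - 2) * ‖gradient f x‖ ^ (p - 4))
            (g := fun x => hess f x (gradient f x)) ?_ ?_
          · exact (continuousAt_const.mul (hrp (p - 4)))
          · exact (Continuous.clm_apply (contDiff_hess f hf).continuous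
              (contDiff_gradient f hf).continuous).continuousAt
        have hbil : Continuous fun q : (EuclideanSpace ℝ (Fin n) →L[ℝ] ℝ) ×
            EuclideanSpace ℝ (Fin n) => (q.1).smulRight q.2 :=
          (ContinuousLinearMap.smulRightL ℝ (EuclideanSpace ℝ (Fin n))
            (EuclideanSpace ℝ (Fin n))).continuous₂
        exact ContinuousAt.comp (x := x₀) (g := fun q : (EuclideanSpace ℝ (Fin n) →L[ℝ] ℝ) ×
            EuclideanSpace ℝ (Fin n) => (q.1).smulRight q.2) (f := fun x => (dgF f p x, Wf f x))
          hbil.continuousAt (ContinuousAt.prodMk hdg (cont_Wf f hf).continuousAt)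
    exact hc.congr (Filter.EventuallyEq.symm hev)

end Aux3

section Aux4

variable {n : ℕ} (f : EuclideanSpace ℝ (Fin n) → ℝ)

lemma integrable_aux (hsupp : HasCompactSupport f) (g : EuclideanSpace ℝ (Fin n) → ℝ)
    (hg : Continuous g) (hz : ∀ x, gradient f x = 0 → g x = 0) :
    Integrable g (volume : Measure (EuclideanSpace ℝ (Fin n))) :=
  hg.integrable_of_hasCompactSupport
    (HasCompactSupport.intro hsupp fun x hx => hz x (grad_zero_outside f hsupp x hx))

lemma cont_frob (hf : ContDiff ℝ (⊤ : ℕ∞) f) :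
    Continuous fun x => frobC (hess f x) (hess f x) := by
  apply continuous_finset_sum
  intro i _
  apply continuous_finset_sum
  intro j _
  exact (((contDiff_hess f hf).continuous.clm_apply continuous_const).clm_apply
    continuous_const).mul
    (((contDiff_hess f hf).continuous.clm_apply continuous_const).clm_apply continuous_const)

lemma t2_if_eq (hf : ContDiff ℝ (⊤ : ℕ∞) f) (p : ℝ) (hp : 3 < p) :
    (fun x => if gradient f x = 0 then (0:ℝ) else
        ‖gradient f x‖ ^ (p - 2) * frobC (hess f x) (hess f x))
      = fun x => ‖gradient f x‖ ^ (p - 2) * frobC (hess f x) (hess f x) := by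
  funext x
  by_cases hx : gradient f x = 0
  · rw [if_pos hx, hx]
    rw [norm_zero, Real.zero_rpow (by linarith : p - 2 ≠ 0), zero_mul]
  · rw [if_neg hx]

lemma t3_if_eq (hf : ContDiff ℝ (⊤ : ℕ∞) f) (p : ℝ) (hp : 3 < p) :
    (fun x => if gradient f x = 0 then (0:ℝ) else
        ‖gradient f x‖ ^ (p - 2) * ⟪gradient f x, gradient (lap f) x⟫_ℝ)
      = fun x => ‖gradient f x‖ ^ (p - 2) * ⟪gradient f x, gradient (lap f) x⟫_ℝ := by
  funext x
  by_cases hx : gradient f x = 0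
  · rw [if_pos hx, hx]
    rw [norm_zero, Real.zero_rpow (by linarith : p - 2 ≠ 0), zero_mul]
  · rw [if_neg hx]

lemma cont_t1 (hf : ContDiff ℝ (⊤ : ℕ∞) f) (p : ℝ) (hp : 3 < p) :
    Continuous fun x => if gradient f x = 0 then (0:ℝ) else
      ‖gradient f x‖ ^ (p - 4) * ‖sharpC (hess f x (gradient f x))‖ ^ 2 := by
  have hp2 : (0:ℝ) < p - 2 := by linarith
  have hWeq : ∀ x : EuclideanSpace ℝ (Fin n),
      sharpC (hess f x (gradient f x)) = Wf f x := fun x => (sharpL_eq_sharpC _).symm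
  rw [continuous_iff_continuousAt]
  intro x₀
  by_cases hx : gradient f x₀ = 0
  · rw [ContinuousAt, if_pos hx]
    have hβc : Continuous fun x => ‖hess f x‖ ^ (2:ℕ) * ‖gradient f x‖ ^ (p - 2) :=
      ((cont_normH f hf).pow 2).mul (cont_normG_rpow f hf _ hp2.le)
    have hβ0 : ‖hess f x₀‖ ^ (2:ℕ) * ‖gradient f x₀‖ ^ (p - 2) = 0 := by
      rw [hx]
      simp [Real.zero_rpow (ne_of_gt hp2)]
    have htend := hβc.tendsto x₀
    rw [hβ0] at htend
    apply squeeze_zero_norm _ htend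
    intro x
    by_cases hgx : gradient f x = 0
    · rw [if_pos hgx, norm_zero]
      positivity
    · rw [if_neg hgx, hWeq]
      have hGpos : (0:ℝ) < ‖gradient f x‖ := norm_pos_iff.mpr hgx
      have hw : ‖Wf f x‖ ≤ ‖hess f x‖ * ‖gradient f x‖ := norm_Wf_le f x
      have hwsq : ‖Wf f x‖ ^ 2 ≤ (‖hess f x‖ * ‖gradient f x‖) ^ 2 := by
        apply pow_le_pow_left₀ (norm_nonneg _) hw
      have hnn : (0:ℝ) ≤ ‖gradient f x‖ ^ (p - 4) := Real.rpow_nonneg (norm_nonneg _) _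
      have h1 : ‖gradient f x‖ ^ (p - 4) * ‖Wf f x‖ ^ 2
          ≤ ‖gradient f x‖ ^ (p - 4) * (‖hess f x‖ * ‖gradient f x‖) ^ 2 :=
        mul_le_mul_of_nonneg_left hwsq hnn
      have hr := rpow_sub4_mul_sq ‖gradient f x‖ hGpos p
      have h2 : ‖gradient f x‖ ^ (p - 4) * (‖hess f x‖ * ‖gradient f x‖) ^ 2
          = ‖hess f x‖ ^ (2:ℕ) * ‖gradient f x‖ ^ (p - 2) := by
        linear_combination ‖hess f x‖ ^ 2 * hr
      rw [Real.norm_of_nonneg (mul_nonneg hnn (by positivity))]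
      linarith
  · have hopen : IsOpen {x : EuclideanSpace ℝ (Fin n) | gradient f x ≠ 0} :=
      isOpen_compl_iff.mpr (isClosed_singleton.preimage (contDiff_gradient f hf).continuous)
    have hev : ∀ᶠ x in nhds x₀, (if gradient f x = 0 then (0:ℝ) else
        ‖gradient f x‖ ^ (p - 4) * ‖sharpC (hess f x (gradient f x))‖ ^ 2)
        = ‖gradient f x‖ ^ (p - 4) * ‖Wf f x‖ ^ 2 := by
      filter_upwards [hopen.mem_nhds hx] with x hgx
      rw [if_neg hgx, hWeq]
    have hc : ContinuousAt (fun x => ‖gradient f x‖ ^ (p - 4) * ‖Wf f x‖ ^ 2) x₀ := by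
      apply ContinuousAt.mul
      · exact ContinuousAt.comp (x := x₀) (g := fun s : ℝ => s ^ (p - 4))
          (f := fun x => ‖gradient f x‖)
          (Real.continuousAt_rpow_const _ _ (Or.inl (norm_ne_zero_iff.mpr hx)))
          ((contDiff_gradient f hf).continuous.norm.continuousAt)
      · exact (((cont_Wf f hf).norm).pow 2).continuousAt
    exact hc.congr (Filter.EventuallyEq.symm hev)

lemma integral_F_eq_zero (hf : ContDiff ℝ (⊤ : ℕ∞) f) (hsupp : HasCompactSupport f)
    (p : ℝ) (hp : 3 < p) (v : EuclideanSpace ℝ (Fin n)) :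
    ∫ x, ⟪Dfield f p x v, v⟫_ℝ = 0 := by
  have hp2 : (0:ℝ) < p - 2 := by linarith
  have hder : ∀ x, HasFDerivAt (fun y => (innerSL ℝ v) (Vf f p y))
      ((innerSL ℝ v).comp (Dfield f p x)) x := fun x =>
    (innerSL ℝ v).hasFDerivAt.comp x (hasFDerivAt_Vf f hf p hp x)
  have hI : Integrable (fun x => ⟪v, Dfield f p x v⟫_ℝ)
      (volume : Measure (EuclideanSpace ℝ (Fin n))) := by
    apply integrable_aux f hsupp
    · exact Continuous.inner continuous_const
        ((cont_Dfield f hf p hp).clm_apply continuous_const)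
    · intro x hx
      simp [Dfield, hx]
  have hV : Integrable (fun x => ⟪v, Vf f p x⟫_ℝ)
      (volume : Measure (EuclideanSpace ℝ (Fin n))) := by
    apply integrable_aux f hsupp
    · apply Continuous.inner continuous_const
      exact (cont_normG_rpow f hf _ hp2.le).smul (cont_Wf f hf)
    · intro x hx
      have : Vf f p x = 0 := by
        rw [Vf, hx]
        simp [Real.zero_rpow (ne_of_gt hp2)]
      simp [this]
  have h := integral_bilinear_hasFDerivAt_right_eq_neg_left_of_integrable
    (μ := (volume : Measure (EuclideanSpace ℝ (Fin n))))
    (B := ContinuousLinearMap.mul ℝ ℝ) (v := v)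
    (f := fun y => (innerSL ℝ v) (Vf f p y))
    (f' := fun x => (innerSL ℝ v).comp (Dfield f p x))
    (g := fun _ => (1:ℝ)) (g' := fun _ => (0 : EuclideanSpace ℝ (Fin n) →L[ℝ] ℝ))
    (by simpa using hI) (by simpa using (integrable_zero _ ℝ
      (volume : Measure (EuclideanSpace ℝ (Fin n))))) (by simpa using hV)
    (fun x _ => hder x) (fun x _ => hasFDerivAt_const 1 x)
  simp only [ContinuousLinearMap.zero_apply, ContinuousLinearMap.mul_apply',
    mul_zero, zero_mul, mul_one, ContinuousLinearMap.coe_comp', Function.comp_apply,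
    innerSL_apply_apply, MeasureTheory.integral_zero] at h
  have h2 : ∫ x, ⟪v, Dfield f p x v⟫_ℝ = 0 := by linarith [h]
  rw [← h2]
  congr 1
  funext x
  exact real_inner_comm _ _

end Aux4

/-- The integrated `p`-Bochner (Reilly-type) identity on Euclidean space: for smooth
compactly supported `f` and real `p > 3`,
`(p−2)∫ ‖∇f‖^{p−4}‖Hess f(∇f,·)‖² + ∫ ‖∇f‖^{p−2}‖Hess f‖_F²
  + ∫ ‖∇f‖^{p−2}⟨∇f, ∇(Δf)⟩ = 0`,
where the integrands are interpreted as `0` at points where `∇f = 0`. -/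
theorem integrated_p_bochner {n : ℕ} (f : EuclideanSpace ℝ (Fin n) → ℝ)
    (hf : ContDiff ℝ (⊤ : ℕ∞) f) (hsupp : HasCompactSupport f) (p : ℝ) (hp : 3 < p) :
    (p - 2) *
        (∫ x, if gradient f x = 0 then (0 : ℝ) else
          ‖gradient f x‖ ^ (p - 4) * ‖sharpC (hess f x (gradient f x))‖ ^ 2) +
      (∫ x, if gradient f x = 0 then (0 : ℝ) else
        ‖gradient f x‖ ^ (p - 2) * frobC (hess f x) (hess f x)) +
      (∫ x, if gradient f x = 0 then (0 : ℝ) else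
        ‖gradient f x‖ ^ (p - 2) * ⟪gradient f x, gradient (lap f) x⟫_ℝ) = 0 := by
  have hp2 : (0:ℝ) < p - 2 := by linarith
  have hI1 : Integrable (fun x => if gradient f x = 0 then (0 : ℝ) else
      ‖gradient f x‖ ^ (p - 4) * ‖sharpC (hess f x (gradient f x))‖ ^ 2)
      (volume : Measure (EuclideanSpace ℝ (Fin n))) :=
    integrable_aux f hsupp _ (cont_t1 f hf p hp) (fun x hx => if_pos hx)
  have hI2 : Integrable (fun x => if gradient f x = 0 then (0 : ℝ) else
      ‖gradient f x‖ ^ (p - 2) * frobC (hess f x) (hess f x))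
      (volume : Measure (EuclideanSpace ℝ (Fin n))) := by
    refine integrable_aux f hsupp _ ?_ (fun x hx => if_pos hx)
    rw [t2_if_eq f hf p hp]
    exact (cont_normG_rpow f hf _ hp2.le).mul (cont_frob f hf)
  have hI3 : Integrable (fun x => if gradient f x = 0 then (0 : ℝ) else
      ‖gradient f x‖ ^ (p - 2) * ⟪gradient f x, gradient (lap f) x⟫_ℝ)
      (volume : Measure (EuclideanSpace ℝ (Fin n))) := by
    refine integrable_aux f hsupp _ ?_ (fun x hx => if_pos hx)
    rw [t3_if_eq f hf p hp]
    exact (cont_normG_rpow f hf _ hp2.le).mul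
      (Continuous.inner (contDiff_gradient f hf).continuous
        (contDiff_gradient (lap f) (contDiff_lap f hf)).continuous)
  have hIF : ∀ i, Integrable (fun x =>
      ⟪Dfield f p x (stdOrthonormalBasis ℝ (EuclideanSpace ℝ (Fin n)) i),
        stdOrthonormalBasis ℝ (EuclideanSpace ℝ (Fin n)) i⟫_ℝ)
      (volume : Measure (EuclideanSpace ℝ (Fin n))) := fun i =>
    integrable_aux f hsupp _
      (Continuous.inner ((cont_Dfield f hf p hp).clm_apply continuous_const) continuous_const)
      (fun x hx => by simp [Dfield, hx])
  have hsum0 : ∫ x, ∑ i,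
      ⟪Dfield f p x (stdOrthonormalBasis ℝ (EuclideanSpace ℝ (Fin n)) i),
        stdOrthonormalBasis ℝ (EuclideanSpace ℝ (Fin n)) i⟫_ℝ = 0 := by
    rw [integral_finset_sum Finset.univ (fun i _ => hIF i)]
    exact Finset.sum_eq_zero fun i _ => integral_F_eq_zero f hf hsupp p hp _
  have heq : (fun x => ∑ i,
      ⟪Dfield f p x (stdOrthonormalBasis ℝ (EuclideanSpace ℝ (Fin n)) i),
        stdOrthonormalBasis ℝ (EuclideanSpace ℝ (Fin n)) i⟫_ℝ)
      = fun x =>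
        (p - 2) * (if gradient f x = 0 then (0 : ℝ) else
            ‖gradient f x‖ ^ (p - 4) * ‖sharpC (hess f x (gradient f x))‖ ^ 2) +
          ((if gradient f x = 0 then (0 : ℝ) else
            ‖gradient f x‖ ^ (p - 2) * frobC (hess f x) (hess f x)) +
          (if gradient f x = 0 then (0 : ℝ) else
            ‖gradient f x‖ ^ (p - 2) * ⟪gradient f x, gradient (lap f) x⟫_ℝ)) := by
    funext x
    rw [div_eq f hf p x]
    simp only [Wf, sharpL_eq_sharpC]
  rw [heq] at hsum0
  have h1 : ∫ x, ((p - 2) * (if gradient f x = 0 then (0 : ℝ) else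
        ‖gradient f x‖ ^ (p - 4) * ‖sharpC (hess f x (gradient f x))‖ ^ 2) +
        ((if gradient f x = 0 then (0 : ℝ) else
          ‖gradient f x‖ ^ (p - 2) * frobC (hess f x) (hess f x)) +
        (if gradient f x = 0 then (0 : ℝ) else
          ‖gradient f x‖ ^ (p - 2) * ⟪gradient f x, gradient (lap f) x⟫_ℝ)))
      = (∫ x, (p - 2) * (if gradient f x = 0 then (0 : ℝ) else
        ‖gradient f x‖ ^ (p - 4) * ‖sharpC (hess f x (gradient f x))‖ ^ 2))
      + ∫ x, ((if gradient f x = 0 then (0 : ℝ) else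
          ‖gradient f x‖ ^ (p - 2) * frobC (hess f x) (hess f x)) +
        (if gradient f x = 0 then (0 : ℝ) else
          ‖gradient f x‖ ^ (p - 2) * ⟪gradient f x, gradient (lap f) x⟫_ℝ)) :=
    integral_add (hI1.const_mul (p - 2)) (hI2.add hI3)
  have h2 : ∫ x, ((if gradient f x = 0 then (0 : ℝ) else
          ‖gradient f x‖ ^ (p - 2) * frobC (hess f x) (hess f x)) +
        (if gradient f x = 0 then (0 : ℝ) else
          ‖gradient f x‖ ^ (p - 2) * ⟪gradient f x, gradient (lap f) x⟫_ℝ))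
      = (∫ x, if gradient f x = 0 then (0 : ℝ) else
          ‖gradient f x‖ ^ (p - 2) * frobC (hess f x) (hess f x))
      + ∫ x, if gradient f x = 0 then (0 : ℝ) else
          ‖gradient f x‖ ^ (p - 2) * ⟪gradient f x, gradient (lap f) x⟫_ℝ :=
    integral_add hI2 hI3
  have h3 : ∫ x, (p - 2) * (if gradient f x = 0 then (0 : ℝ) else
        ‖gradient f x‖ ^ (p - 4) * ‖sharpC (hess f x (gradient f x))‖ ^ 2)
      = (p - 2) * ∫ x, (if gradient f x = 0 then (0 : ℝ) else
        ‖gradient f x‖ ^ (p - 4) * ‖sharpC (hess f x (gradient f x))‖ ^ 2) :=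
    MeasureTheory.integral_const_mul _ _
  rw [h1, h2, h3] at hsum0
  linarith
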